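/- Let a be the minimum letter of a totally ordered alphabet A and x a finite word over A. Then x is singular if and only if λ_a(x)·a is singular, where λ_a is the morphism fixing a and sending every other letter d' to a d'. -/

import Mathlib

/-- Lexicographic order on finite words with the convention that
`u < v` whenever `v` is a proper prefix of `u`. -/
def Wlt {A : Type*} [LinearOrder A] : List A → List A → Prop
  | [], _ => False
  | _ :: _, [] => True
  | a :: u, b :: v => a < b ∨ (a = b ∧ Wlt u v)

/-- A finite word is singular if every factorization `x = reverse u ++ v ++ w`
with `v` nonempty, `v ≠ reverse v`, `u ≠ w` satisfies `v < v̄ ↔ w < u`. -/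
def Singular {A : Type*} [LinearOrder A] (x : List A) : Prop :=
  ∀ u v w : List A, x = u.reverse ++ v ++ w → v ≠ [] → v ≠ v.reverse → u ≠ w →
    (Wlt v v.reverse ↔ Wlt w u)

/-- The morphism `λ_d` sending `d ↦ d` and `d' ↦ d d'` for `d' ≠ d`. -/
def lamM {A : Type*} [DecidableEq A] (d : A) (x : List A) : List A :=
  (x.map (fun e => if e = d then [d] else [d, e])).flatten

/-- The morphism `ρ_d` sending `d ↦ d` and `d' ↦ d' d` for `d' ≠ d`. -/
def rhoM {A : Type*} [DecidableEq A] (d : A) (x : List A) : List A :=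
  (x.map (fun e => if e = d then [d] else [e, d])).flatten

/-!
Since `a` is minimal, `λ_a(x) a = a ρ_a(x)` and both `s ↦ λ_a(s) a` and `ρ_a` preserve and reflect
the order on words, while reversal exchanges `λ_a` and `ρ_a`. Peeling equal outer letters of `v` off
onto `u` and `w`, singularity only has to be checked when `v = c m d` with `c ≠ d`, where it reads
`c < d ↔ w < u`. In `λ_a(x) a` every letter other than `a` sits between two `a`'s, so when `c, d ≠ a`
the factorization comes from one of `x`. When `c = a ≠ d`, minimality of `a` forces `w < u`, using the
singularity of `x` when `u` also starts with `a`; the case `c ≠ a = d` is its mirror image.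
-/

section
variable {A : Type*} [LinearOrder A]

@[simp] lemma wlt_nil_left (v : List A) : ¬ Wlt [] v := id

@[simp] lemma wlt_cons_nil (c : A) (u : List A) : Wlt (c :: u) [] := trivial

@[simp] lemma wlt_cons_cons (c d : A) (u v : List A) :
    Wlt (c :: u) (d :: v) ↔ c < d ∨ c = d ∧ Wlt u v := Iff.rfl

lemma wlt_irrefl (u : List A) : ¬ Wlt u u := by
  induction u <;> simp_all

lemma wlt_asymm {u v : List A} (h : Wlt u v) : ¬ Wlt v u := by
  induction u generalizing v with
  | nil => simp at h
  | cons c u ih =>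
    cases v with
    | nil => simp
    | cons d v =>
      simp only [wlt_cons_cons] at h ⊢
      rcases h with h | ⟨rfl, h⟩
      · simp [h.not_gt, h.ne']
      · simp [ih h]

lemma wlt_or_wlt_of_ne {u v : List A} (h : u ≠ v) : Wlt u v ∨ Wlt v u := by
  induction u generalizing v with
  | nil => cases v <;> simp_all
  | cons c u ih =>
    cases v with
    | nil => simp
    | cons d v =>
      simp only [wlt_cons_cons]
      rcases lt_trichotomy c d with hcd | rfl | hcd
      · simp [hcd]
      · simpa using ih (by simpa using h)
      · simp [hcd]

lemma wlt_iff_not_wlt {u v : List A} (h : u ≠ v) : Wlt u v ↔ ¬ Wlt v u :=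
  ⟨wlt_asymm, (wlt_or_wlt_of_ne h).resolve_right⟩

lemma wlt_append_right {u v : List A} (h : u.length = v.length) (z : List A) :
    Wlt (u ++ z) (v ++ z) ↔ Wlt u v := by
  induction u generalizing v with
  | nil => simp [List.length_eq_zero_iff.mp h.symm, wlt_irrefl]
  | cons c u ih =>
    cases v with
    | nil => simp at h
    | cons d v => simp [ih (Nat.succ_inj.mp h)]

lemma Singular.reverse {x : List A} (hx : Singular x) : Singular x.reverse := by
  intro u v w h hv hvv huw
  have := hx w v.reverse u (by simpa using congrArg List.reverse h) (by simpa using hv)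
    (by simpa [eq_comm] using hvv) huw.symm
  rw [List.reverse_reverse] at this
  rw [wlt_iff_not_wlt hvv, this, ← wlt_iff_not_wlt huw.symm]

lemma singular_iff_distinct_ends {x : List A} : Singular x ↔ ∀ u c m d w,
    x = u.reverse ++ c :: (m ++ d :: w) → c ≠ d → u ≠ w → (c < d ↔ Wlt w u) := by
  refine ⟨fun hx u c m d w h hcd huw => ?_, fun hx u v w h hv hvv huw => ?_⟩
  · have := hx u (c :: (m ++ [d])) w (by simp [h]) (by simp) (by simp [hcd]) huw
    simpa [hcd] using this
  induction v using List.bidirectionalRec generalizing u w with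
  | nil => exact absurd rfl hv
  | singleton c => exact absurd rfl hvv
  | cons_append c m d ih =>
    by_cases hcd : c = d
    · subst hcd
      have hm : m ≠ m.reverse := by simpa using hvv
      have hm' : m ≠ [] := by rintro rfl; exact hm rfl
      have := ih (c :: u) (c :: w) (by simp [h]) hm' hm (by simpa using huw)
      simpa [wlt_append_right, wlt_irrefl] using this
    · have := hx u c m d w (by simp [h]) hcd huw
      simpa [hcd] using this

end

section
variable {A : Type*} [DecidableEq A] (a : A)

@[simp] lemma lamM_nil : lamM a [] = [] := rfl
@[simp] lemma rhoM_nil : rhoM a [] = [] := rfl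

@[simp] lemma lamM_cons (e : A) (s : List A) :
    lamM a (e :: s) = (if e = a then [a] else [a, e]) ++ lamM a s := by
  simp [lamM]

@[simp] lemma rhoM_cons (e : A) (s : List A) :
    rhoM a (e :: s) = (if e = a then [a] else [e, a]) ++ rhoM a s := by
  simp [rhoM]

@[simp] lemma lamM_append (s t : List A) : lamM a (s ++ t) = lamM a s ++ lamM a t := by
  simp [lamM]

lemma lamM_append_singleton (s : List A) : lamM a s ++ [a] = a :: rhoM a s := by
  induction s with
  | nil => rfl
  | cons e s ih => by_cases e = a <;> simp_all

lemma reverse_rhoM (s : List A) : (rhoM a s).reverse = lamM a s.reverse := by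
  induction s with
  | nil => rfl
  | cons e s ih => by_cases e = a <;> simp_all

lemma reverse_lamM (s : List A) : (lamM a s).reverse = rhoM a s.reverse := by
  rw [← List.reverse_reverse (rhoM a _), reverse_rhoM, List.reverse_reverse]

lemma reverse_lamM_append_singleton (s : List A) :
    (lamM a s ++ [a]).reverse = lamM a s.reverse ++ [a] := by
  rw [List.reverse_append, reverse_lamM, lamM_append_singleton]
  rfl

lemma rhoM_injective : Function.Injective (rhoM a) := by
  intro s t h
  induction s generalizing t with
  | nil => cases t with
    | nil => rfl
    | cons f t => by_cases f = a <;> simp_all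
  | cons e s ih => cases t with
    | nil => by_cases e = a <;> simp_all
    | cons f t =>
      have ih := @ih t
      by_cases e = a <;> by_cases f = a <;> simp_all

lemma lamM_append_singleton_eq_append_cons_self {x P Q : List A}
    (h : lamM a x ++ [a] = P ++ a :: Q) :
    ∃ p s, x = p ++ s ∧ P = lamM a p ∧ a :: Q = lamM a s ++ [a] := by
  induction x generalizing P with
  | nil => rcases P with _ | ⟨b, P⟩ <;> simp_all
  | cons f x ih =>
    rcases P with _ | ⟨b, P⟩
    · exact ⟨[], f :: x, rfl, rfl, h.symm⟩
    by_cases hf : f = a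
    · simp only [lamM_cons, hf, if_true, List.cons_append, List.nil_append, List.cons.injEq] at h
      obtain ⟨p, s, rfl, rfl, hs⟩ := ih h.2
      exact ⟨a :: p, s, by simp [hf], by simp [h.1], hs⟩
    rcases P with _ | ⟨c, P⟩
    · simp [hf] at h
    simp only [lamM_cons, hf, if_false, List.cons_append, List.nil_append, List.cons.injEq] at h
    obtain ⟨p, s, rfl, rfl, hs⟩ := ih h.2.2
    exact ⟨f :: p, s, rfl, by simp [hf, ← h.1, ← h.2.1], hs⟩

lemma lamM_append_singleton_eq_append_cons_of_ne {e : A} (he : e ≠ a) {x P Q : List A}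
    (h : lamM a x ++ [a] = P ++ e :: Q) :
    ∃ p s, x = p ++ e :: s ∧ P = lamM a p ++ [a] ∧ Q = lamM a s ++ [a] := by
  induction x generalizing P with
  | nil => rcases P with _ | ⟨b, _ | ⟨c, P⟩⟩ <;> simp_all
  | cons f x ih =>
    rcases P with _ | ⟨b, P⟩
    · by_cases f = a <;> simp_all
    by_cases hf : f = a
    · simp only [lamM_cons, hf, if_true, List.cons_append, List.nil_append, List.cons.injEq] at h
      obtain ⟨p, s, rfl, rfl, hs⟩ := ih h.2
      exact ⟨a :: p, s, by simp [hf], by simp [h.1], hs⟩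
    rcases P with _ | ⟨c, P⟩
    · simp only [lamM_cons, hf, if_false, List.cons_append, List.nil_append, List.cons.injEq] at h
      exact ⟨[], x, by simp [h.2.1], by simp [h.1], h.2.2.symm⟩
    simp only [lamM_cons, hf, if_false, List.cons_append, List.nil_append, List.cons.injEq] at h
    obtain ⟨p, s, rfl, rfl, hs⟩ := ih h.2.2
    exact ⟨f :: p, s, rfl, by simp [hf, ← h.1, ← h.2.1], hs⟩

end

section
variable {A : Type*} [LinearOrder A] {a : A}

lemma wlt_rhoM_iff (ha : ∀ e, a ≤ e) {s t : List A} :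
    Wlt (rhoM a s) (rhoM a t) ↔ Wlt s t := by
  induction s generalizing t with
  | nil => simp
  | cons c s ih =>
    cases t with
    | nil => by_cases c = a <;> simp_all
    | cons e t =>
      by_cases hc : c = a <;> by_cases he : e = a
      · simp [hc, he, ih]
      · simp [hc, he, lt_of_le_of_ne (ha e) (Ne.symm he)]
      · simp [hc, he, (ha c).not_gt]
      · simp [hc, he, ih]

lemma wlt_lamM_append_singleton_iff (ha : ∀ e, a ≤ e) {s t : List A} :
    Wlt (lamM a s ++ [a]) (lamM a t ++ [a]) ↔ Wlt s t := by
  simp [lamM_append_singleton, wlt_rhoM_iff ha]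

lemma Singular.of_lamM_append_singleton (ha : ∀ e, a ≤ e) {x : List A}
    (hy : Singular (lamM a x ++ [a])) : Singular x := by
  intro u v w hx hv hvv huw
  have hsplit : lamM a x ++ [a] = (rhoM a u).reverse ++ (lamM a v ++ [a]) ++ rhoM a w := by
    simp only [reverse_rhoM, hx, lamM_append, List.append_assoc, List.singleton_append]
    rw [lamM_append_singleton]
  have hv' : lamM a v ++ [a] ≠ (lamM a v ++ [a]).reverse := by
    rw [reverse_lamM_append_singleton, lamM_append_singleton, lamM_append_singleton, Ne,
      List.cons.injEq]
    exact fun h => hvv (rhoM_injective a h.2)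
  have := hy _ _ _ hsplit (by simp) hv' ((rhoM_injective a).ne huw)
  rwa [reverse_lamM_append_singleton, wlt_lamM_append_singleton_iff ha, wlt_rhoM_iff ha] at this

lemma wlt_iff_of_lamM_append_singleton_eq (ha : ∀ e, a ≤ e) {x u m w : List A} {c d : A}
    (hx : Singular x) (hc : c ≠ a) (hd : d ≠ a) (hcd : c ≠ d) (huw : u ≠ w)
    (h : lamM a x ++ [a] = u.reverse ++ c :: (m ++ d :: w)) : c < d ↔ Wlt w u := by
  obtain ⟨p, t, rfl, hp, ht⟩ := lamM_append_singleton_eq_append_cons_of_ne a hc h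
  obtain ⟨q, s, rfl, -, rfl⟩ := lamM_append_singleton_eq_append_cons_of_ne a hd ht.symm
  obtain rfl : u = lamM a p.reverse ++ [a] := by
    rw [← List.reverse_reverse u, hp, reverse_lamM_append_singleton]
  rw [wlt_lamM_append_singleton_iff ha]
  exact singular_iff_distinct_ends.mp hx p.reverse c q d s (by simp) hcd
    (by rintro rfl; exact huw rfl)

lemma wlt_of_lamM_append_singleton_eq (ha : ∀ e, a ≤ e) {x u m w : List A} {d : A}
    (hx : Singular x) (hd : d ≠ a) (huw : u ≠ w)
    (h : lamM a x ++ [a] = u.reverse ++ a :: (m ++ d :: w)) : Wlt w u := by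
  obtain ⟨p, t, rfl, hp, ht⟩ := lamM_append_singleton_eq_append_cons_self a h
  obtain ⟨q, s, rfl, -, rfl⟩ :=
    lamM_append_singleton_eq_append_cons_of_ne a hd (P := a :: m) (Q := w) ht.symm
  obtain ⟨r, rfl⟩ : ∃ r, p = r.reverse := ⟨p.reverse, by simp⟩
  obtain rfl : u = rhoM a r := by
    rw [← List.reverse_reverse u, hp, reverse_lamM, List.reverse_reverse]
  have hs : a :: rhoM a s = rhoM a (a :: s) := by simp
  rw [lamM_append_singleton, hs, wlt_rhoM_iff ha]
  rcases r with _ | ⟨e, r⟩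
  · simp
  by_cases he : e = a
  · subst e
    simp only [wlt_cons_cons, lt_irrefl, true_and, false_or]
    refine (singular_iff_distinct_ends.mp hx r a q d s (by simp) (Ne.symm hd) ?_).mp
      (lt_of_le_of_ne (ha d) (Ne.symm hd))
    rintro rfl
    exact huw (by simp [lamM_append_singleton])
  · simp [lt_of_le_of_ne (ha e) (Ne.symm he)]

end

theorem singular_iff_lamM_min {A : Type*} [LinearOrder A] (a : A) (ha : ∀ e : A, a ≤ e)
    (x : List A) : Singular x ↔ Singular (lamM a x ++ [a]) := by
  refine ⟨fun hx => singular_iff_distinct_ends.mpr fun u c m d w h hcd huw => ?_,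
    Singular.of_lamM_append_singleton ha⟩
  by_cases hc : c = a
  · subst c
    exact iff_of_true (lt_of_le_of_ne (ha d) hcd)
      (wlt_of_lamM_append_singleton_eq ha hx (Ne.symm hcd) huw h)
  by_cases hd : d = a
  · subst d
    have hrev : lamM a x.reverse ++ [a] = w.reverse ++ a :: (m.reverse ++ c :: u) := by
      rw [← reverse_lamM_append_singleton, h]
      simp
    exact iff_of_false (ha c).not_gt
      (wlt_asymm (wlt_of_lamM_append_singleton_eq ha hx.reverse hc huw.symm hrev))
  exact wlt_iff_of_lamM_append_singleton_eq ha hx hc hd hcd huw h
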